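/- arXiv:1512.03811 — 5 statements merged into one kernel-verified Lean document; each statement's English description precedes it below -/
import Mathlib

section
/- Let G be a finite group and g ≥ 1. The number of tuples (R₁,...,R_g) ∈ G^g satisfying R₁²···R_g² = e equals |G|^{g-1} · Σ_{π ∈ Irr(G)} ν₂(π)^g · (dim π)^{2-g}. -/
/-!
Writing `δ` for the indicator of the identity, the tuples are counted by
`∑_R δ(R₁²⋯R_g²)`, and the regular representation gives `|G| δ = ∑_π (dim π) χ_π`.
By Schur's lemma the central element `∑_r π(r²)` acts on `π` as the scalar `|G| ν₂(π) / dim π`,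
so `∑_R χ_π(R₁²⋯R_g²) = tr((∑_r π(r²))^g) = (|G| ν₂(π) / dim π)^g dim π`.
-/

open CategoryTheory Module

theorem Fintype.sum_pow_eq_sum_list_prod_ofFn {α M : Type*} [Fintype α] [Semiring M]
    (f : α → M) (n : ℕ) :
    (∑ a, f a) ^ n = ∑ p : Fin n → α, (List.ofFn fun i => f (p i)).prod := by
  induction n with
  | zero => simp
  | succ n ih =>
    rw [pow_succ', ih, Finset.sum_mul_sum, ← Fintype.sum_prod_type',
      ← (Fin.consEquiv fun _ => α).sum_comp]
    simp [List.ofFn_succ]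

theorem LinearMap.trace_eq_trace_restrict_add_trace_restrict {R M : Type*} [Field R]
    [AddCommGroup M] [Module R M] [FiniteDimensional R M] {p q : Submodule R M} (h : IsCompl p q)
    {f : M →ₗ[R] M} (hp : Set.MapsTo f p p) (hq : Set.MapsTo f q q) :
    trace R M f = trace R p (f.restrict hp) + trace R q (f.restrict hq) := by
  have hpq : DirectSum.IsInternal ![p, q] :=
    (DirectSum.isInternal_submodule_iff_isCompl _ zero_ne_one
      (by ext i; fin_cases i <;> simp)).mpr h
  rw [trace_eq_sum_trace_restrict hpq (fun i => by fin_cases i; exacts [hp, hq]),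
    Fin.sum_univ_two]
  rfl

namespace Subrepresentation

variable {k G W : Type*} [Field k] [Monoid G] [AddCommGroup W] [Module k W]
  {ρ : Representation k G W}

theorem isCompl_toSubmodule {S T : Subrepresentation ρ} (h : IsCompl S T) :
    IsCompl S.toSubmodule T.toSubmodule :=
  ⟨disjoint_iff.mpr (congrArg toSubmodule h.inf_eq_bot),
    codisjoint_iff.mpr (congrArg toSubmodule h.sup_eq_top)⟩

variable [FiniteDimensional k W]

theorem character_eq_add_of_isCompl {S T : Subrepresentation ρ} (h : IsCompl S T) :
    ρ.character = S.toRepresentation.character + T.toRepresentation.character := by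
  ext g
  exact LinearMap.trace_eq_trace_restrict_add_trace_restrict (isCompl_toSubmodule h)
    (S.apply_mem_toSubmodule g) (T.apply_mem_toSubmodule g)

theorem finrank_lt_of_ne_top {S : Subrepresentation ρ} (h : S ≠ ⊤) :
    finrank k S.toSubmodule < finrank k W :=
  Submodule.finrank_lt fun h' => h (toSubmodule_injective h')

end Subrepresentation

theorem Representation.character_leftRegular {k G : Type*} [Field k] [Group G] [Fintype G]
    [DecidableEq G] (x : G) :
    (leftRegular k G).character x = if x = 1 then (Fintype.card G : k) else 0 := by
  rw [character, LinearMap.trace_eq_matrix_trace k (MonoidAlgebra.basis G k), Matrix.trace]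
  simp [LinearMap.toMatrix_apply, ofMulAction_single, MonoidAlgebra.basis,
    MonoidAlgebra.coeff_single, Finsupp.single_apply]

namespace FDRep

section Schur

variable {k G : Type*} [Field k] [Group G]

theorem finrank_pos (X : FDRep k G) [Simple X] : 0 < finrank k X := by
  by_contra h
  have : Subsingleton X := Module.finrank_zero_iff (R := k).mp (by omega)
  exact id_nonzero X (by ext x; exact Subsingleton.elim _ _)

theorem exists_eq_smul_one_of_commute [IsAlgClosed k] (X : FDRep k G) [Simple X]
    {T : X →ₗ[k] X} (hT : ∀ g, Commute (X.ρ g) T) : ∃ c : k, T = c • 1 := by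
  let f : X ⟶ X :=
    ⟨InducedCategory.homMk (ModuleCat.ofHom T), fun g => by ext1; exact (hT g).eq.symm⟩
  obtain ⟨c, hc⟩ := endomorphism_simple_eq_smul_id k f
  exact ⟨c, (congrArg (fun φ : X ⟶ X => φ.hom.hom.hom) hc).symm⟩

end Schur

variable {G : Type} [Group G] [Fintype G]

theorem simple_of_isIrreducible {W : Type} [AddCommGroup W] [Module ℂ W] [FiniteDimensional ℂ W]
    (ρ : Representation ℂ G W) [ρ.IsIrreducible] : Simple (FDRep.of ρ) := by
  have := invertibleOfNonzero (NeZero.ne (Nat.card G : ℂ))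
  have h := Representation.char_orthonormal ρ ρ
  rw [if_pos ⟨Representation.Equiv.refl ρ⟩, inv_mul_eq_one₀ (NeZero.ne _)] at h
  exact (simple_iff_char_is_norm_one _).mpr h.symm

section Classification

variable {ι : Type} [Fintype ι] (V : ι → FDRep ℂ G)

theorem exists_character_eq_sum_nsmul
    (hcomplete : ∀ W : FDRep ℂ G, Simple W → ∃ i, Nonempty (W ≅ V i))
    {W : Type} [AddCommGroup W] [Module ℂ W] [FiniteDimensional ℂ W] (ρ : Representation ℂ G W) :
    ∃ m : ι → ℕ, ρ.character = ∑ i, m i • (V i).character := by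
  classical
  induction hn : finrank ℂ W using Nat.strong_induction_on generalizing W with
  | _ n ih =>
  by_cases hsplit : ∃ S : Subrepresentation ρ, S ≠ ⊥ ∧ S ≠ ⊤
  · obtain ⟨S, hS_bot, hS_top⟩ := hsplit
    -- Maschke's theorem makes `Subrepresentation ρ` a complemented lattice.
    obtain ⟨T, hST⟩ := exists_isCompl S
    have hT_top : T ≠ ⊤ := fun h => hS_bot (by simpa [h] using hST.inf_eq_bot)
    obtain ⟨mS, hmS⟩ :=
      ih _ (hn ▸ Subrepresentation.finrank_lt_of_ne_top hS_top) S.toRepresentation rfl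
    obtain ⟨mT, hmT⟩ :=
      ih _ (hn ▸ Subrepresentation.finrank_lt_of_ne_top hT_top) T.toRepresentation rfl
    refine ⟨mS + mT, ?_⟩
    simp only [Subrepresentation.character_eq_add_of_isCompl hST, hmS, hmT, Pi.add_apply,
      add_smul, Finset.sum_add_distrib]
  push Not at hsplit
  rcases subsingleton_or_nontrivial W with hW | hW
  · refine ⟨0, funext fun g => ?_⟩
    simp [Representation.character, Subsingleton.elim (ρ g) 0]
  have : ρ.IsIrreducible :=
    { exists_pair_ne := ⟨⊥, ⊤, fun h => bot_ne_top (congrArg Subrepresentation.toSubmodule h)⟩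
      eq_bot_or_eq_top := fun S => or_iff_not_imp_left.mpr (hsplit S) }
  obtain ⟨i, ⟨e⟩⟩ := hcomplete (FDRep.of ρ) (simple_of_isIrreducible ρ)
  refine ⟨Pi.single i 1, ?_⟩
  rw [show ρ.character = (V i).character from char_iso e]
  simp [Pi.single_apply]

theorem inner_character_eq_of_eq_sum_nsmul (hirr : ∀ i, Simple (V i))
    (hdist : ∀ i j, Nonempty (V i ≅ V j) → i = j) {χ : G → ℂ} {m : ι → ℕ}
    (h : χ = ∑ i, m i • (V i).character) (j : ι) :
    (Nat.card G : ℂ)⁻¹ * ∑ g, χ g * (V j).character g⁻¹ = m j := by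
  classical
  have := invertibleOfNonzero (NeZero.ne (Nat.card G : ℂ))
  have horth : ∀ i, (Nat.card G : ℂ)⁻¹ * ∑ g, (V i).character g * (V j).character g⁻¹
      = if i = j then 1 else 0 := fun i => by
    have := hirr i; have := hirr j
    rw [char_orthonormal]
    exact if_congr ⟨hdist i j, fun hij => hij ▸ ⟨Iso.refl _⟩⟩ rfl rfl
  calc (Nat.card G : ℂ)⁻¹ * ∑ g, χ g * (V j).character g⁻¹
      = ∑ i, (m i : ℂ) * ((Nat.card G : ℂ)⁻¹ * ∑ g, (V i).character g * (V j).character g⁻¹) := by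
        simp only [h, Finset.sum_apply, nsmul_eq_mul, Pi.mul_apply, Pi.natCast_apply,
          Finset.sum_mul, Finset.mul_sum]
        rw [Finset.sum_comm]
        exact Finset.sum_congr rfl fun _ _ => Finset.sum_congr rfl fun _ _ => by ring
    _ = m j := by
        simp only [horth, mul_ite, mul_one, mul_zero, Finset.sum_ite_eq', Finset.mem_univ, if_true]

theorem sum_finrank_mul_character [DecidableEq G] (hirr : ∀ i, Simple (V i))
    (hdist : ∀ i j, Nonempty (V i ≅ V j) → i = j)
    (hcomplete : ∀ W : FDRep ℂ G, Simple W → ∃ i, Nonempty (W ≅ V i)) (x : G) :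
    ∑ i, (finrank ℂ (V i) : ℂ) * (V i).character x
      = if x = 1 then (Fintype.card G : ℂ) else 0 := by
  obtain ⟨m, hm⟩ := exists_character_eq_sum_nsmul V hcomplete (Representation.leftRegular ℂ G)
  have hm_finrank : ∀ j, (m j : ℂ) = finrank ℂ (V j) := fun j => by
    rw [← inner_character_eq_of_eq_sum_nsmul V hirr hdist hm j]
    simp [Representation.character_leftRegular, Nat.card_eq_fintype_card]
  rw [← Representation.character_leftRegular, hm]
  simp [hm_finrank]

theorem card_eq_sum_finrank_mul_sum_character [DecidableEq G] (hirr : ∀ i, Simple (V i))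
    (hdist : ∀ i j, Nonempty (V i ≅ V j) → i = j)
    (hcomplete : ∀ W : FDRep ℂ G, Simple W → ∃ i, Nonempty (W ≅ V i))
    {α : Type*} [Fintype α] (w : α → G) :
    (Fintype.card {a // w a = 1} : ℂ)
      = (Fintype.card G : ℂ)⁻¹ * ∑ i, (finrank ℂ (V i) : ℂ) * ∑ a, (V i).character (w a) := by
  have hG : (Fintype.card G : ℂ) ≠ 0 := Nat.cast_ne_zero.mpr Fintype.card_ne_zero
  have hδ : ∀ x : G, (if x = 1 then 1 else 0 : ℂ)
      = (Fintype.card G : ℂ)⁻¹ * ∑ i, (finrank ℂ (V i) : ℂ) * (V i).character x := fun x => by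
    rw [sum_finrank_mul_character V hirr hdist hcomplete]
    split_ifs <;> simp [hG]
  rw [Fintype.card_subtype, Finset.card_filter, Nat.cast_sum]
  simp only [Nat.cast_ite, Nat.cast_one, Nat.cast_zero, hδ, ← Finset.mul_sum]
  rw [Finset.sum_comm]
  simp only [Finset.mul_sum]

end Classification

theorem sum_ρ_mul_self (X : FDRep ℂ G) [Simple X] :
    ∑ r : G, X.ρ (r * r) = ((finrank ℂ X : ℂ)⁻¹ * ∑ r : G, X.character (r * r)) • 1 := by
  have hcomm : ∀ g, Commute (X.ρ g) (∑ r : G, X.ρ (r * r)) := fun g => by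
    simp only [Commute, SemiconjBy, Finset.mul_sum, Finset.sum_mul, ← map_mul]
    exact Fintype.sum_equiv (MulAut.conj g).toEquiv _ _ fun r => by simp [mul_assoc]
  obtain ⟨c, hc⟩ := exists_eq_smul_one_of_commute X hcomm
  have htrace : ∑ r : G, X.character (r * r) = c * finrank ℂ X := by
    simp only [character, ← map_sum, hc, map_smul, LinearMap.trace_one, smul_eq_mul]
  rw [hc, htrace, mul_comm c, inv_mul_cancel_left₀ (by exact_mod_cast (finrank_pos X).ne')]

theorem sum_character_prod_ofFn_mul_self (X : FDRep ℂ G) [Simple X] (n : ℕ) :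
    ∑ R : Fin n → G, X.character (List.ofFn fun i => R i * R i).prod
      = ((finrank ℂ X : ℂ)⁻¹ * ∑ r : G, X.character (r * r)) ^ n * finrank ℂ X := by
  calc ∑ R : Fin n → G, X.character (List.ofFn fun i => R i * R i).prod
      = LinearMap.trace ℂ X (∑ R : Fin n → G, (List.ofFn fun i => X.ρ (R i * R i)).prod) := by
        simp only [character, map_list_prod, List.map_ofFn, Function.comp_def, map_sum]
    _ = _ := by
        rw [← Fintype.sum_pow_eq_sum_list_prod_ofFn fun r => X.ρ (r * r), sum_ρ_mul_self,
          smul_pow, one_pow, map_smul, LinearMap.trace_one, smul_eq_mul]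

end FDRep

theorem stmt_3_general {G : Type} [Group G] [Fintype G] [DecidableEq G]
    {ι : Type} [Fintype ι] (V : ι → FDRep ℂ G)
    (hirr : ∀ i, CategoryTheory.Simple (V i))
    (hdist : ∀ i j, Nonempty (V i ≅ V j) → i = j)
    (hcomplete : ∀ W : FDRep ℂ G, CategoryTheory.Simple W → ∃ i, Nonempty (W ≅ V i))
    (g : ℕ) :
    (Fintype.card {R : Fin g → G // (List.ofFn fun i => R i * R i).prod = 1} : ℂ)
      = (Fintype.card G : ℂ) ^ ((g : ℤ) - 1) *
        ∑ i, ((Fintype.card G : ℂ)⁻¹ * ∑ x : G, (V i).character (x * x)) ^ g *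
          (Module.finrank ℂ (V i) : ℂ) ^ (2 - (g : ℤ)) := by
  have hG : (Fintype.card G : ℂ) ≠ 0 := Nat.cast_ne_zero.mpr Fintype.card_ne_zero
  rw [FDRep.card_eq_sum_finrank_mul_sum_character V hirr hdist hcomplete, Finset.mul_sum,
    Finset.mul_sum]
  refine Finset.sum_congr rfl fun i _ => ?_
  have := hirr i
  have hd : (finrank ℂ (V i) : ℂ) ≠ 0 := Nat.cast_ne_zero.mpr (FDRep.finrank_pos (V i)).ne'
  rw [FDRep.sum_character_prod_ofFn_mul_self, zpow_sub₀ hG, zpow_sub₀ hd, zpow_natCast,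
    zpow_natCast, zpow_one, zpow_ofNat, mul_pow, mul_pow, inv_pow, inv_pow]
  field_simp

/-- **Frobenius–Schur formula** for non-orientable surfaces: for `g ≥ 1`,
`|{(R₁,…,R_g) : R₁²⋯R_g² = 1}| = |G|^(g-1) ∑_{π} ν₂(π)^g (dim π)^(2-g)`. -/
theorem stmt_3 {G : Type} [Group G] [Fintype G] [DecidableEq G]
    {ι : Type} [Fintype ι] (V : ι → FDRep ℂ G)
    (hirr : ∀ i, CategoryTheory.Simple (V i))
    (hdist : ∀ i j, Nonempty (V i ≅ V j) → i = j)
    (hcomplete : ∀ W : FDRep ℂ G, CategoryTheory.Simple W → ∃ i, Nonempty (W ≅ V i))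
    (g : ℕ) (hg : 1 ≤ g) :
    (Fintype.card {R : Fin g → G // (List.ofFn fun i => R i * R i).prod = 1} : ℂ)
      = (Fintype.card G : ℂ) ^ ((g : ℤ) - 1) *
        ∑ i, ((Fintype.card G : ℂ)⁻¹ * ∑ x : G, (V i).character (x * x)) ^ g *
          (Module.finrank ℂ (V i) : ℂ) ^ (2 - (g : ℤ)) :=
  stmt_3_general V hirr hdist hcomplete g
end

section
/- Let H be a subgroup of a finite group G and γ ∈ G. The restriction to H of the indicator function of the conjugacy class O(γ) of γ in G has Fourier expansion δ_{O(γ)}|_H = (1/|C(γ)|) · Σ_{ρ ∈ Irr(H)} χ_ρ · Tr(Ind_H^G(ρ)(γ⁻¹)), where C(γ) is the centralizer of γ in G. -/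
/-!
Both sides are class functions on `H`, and a class function on a finite group is determined by
its inner products with the irreducible characters: if `f` is orthogonal to all of them, the
central element `∑ f(g) g` of the semisimple algebra `ℂ[H]` acts on every simple submodule by a
scalar (Schur) whose trace is such an inner product, hence by `0`, so it kills `1`. By row
orthogonality the right-hand side pairs with `χ_j` to `|H| |C(γ)|⁻¹ Ind χ_j(γ⁻¹)`. Each
conjugate `k` of `γ` is `x⁻¹ γ x` for exactly `|C(γ)|` elements `x`, so the induced character
formula turns this into `∑_{h ∈ H ∩ O(γ)} χ_j(h⁻¹)`, the pairing of the left-hand side.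
-/

open scoped Classical in
/-- The character of the representation of `G` induced from a representation of a
subgroup `H`, computed by the standard induced character formula
`Tr(Ind_H^G ρ)(g) = |H|⁻¹ ∑_{x ∈ G, x⁻¹gx ∈ H} χ_ρ(x⁻¹gx)`. -/
noncomputable def inducedCharacter {G : Type} [Group G] [Fintype G] (H : Subgroup G)
    (χ : H → ℂ) (g : G) : ℂ :=
  (Nat.card H : ℂ)⁻¹ *
    ∑ x : G, if h : x⁻¹ * g * x ∈ H then χ ⟨x⁻¹ * g * x, h⟩ else 0

open CategoryTheory MonoidAlgebra
open scoped Finset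

universe u

section OfModule

variable {k : Type u} {G : Type*} [Field k] [Monoid G]

noncomputable def Subrepresentation.submoduleOrderIsoOfModule' (M : Type*) [AddCommGroup M]
    [Module k M] [Module (MonoidAlgebra k G) M] [IsScalarTower k (MonoidAlgebra k G) M] :
    Submodule (MonoidAlgebra k G) M ≃o
      Subrepresentation (Representation.ofModule' (k := k) (G := G) M) where
  toFun N := ⟨N.restrictScalars k, fun g _ hm => N.smul_mem (single g 1) hm⟩
  invFun σ :=
    { σ.toSubmodule with
      smul_mem' a m hm := by
        induction a using MonoidAlgebra.induction_linear with
        | zero => rw [zero_smul]; exact σ.toSubmodule.zero_mem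
        | add a b ha hb => rw [add_smul]; exact σ.toSubmodule.add_mem ha hb
        | single g c =>
          rw [← mul_one c, ← smul_eq_mul, ← MonoidAlgebra.smul_single, smul_assoc]
          exact σ.toSubmodule.smul_mem c (σ.apply_mem_toSubmodule g hm) }
  left_inv _ := rfl
  right_inv _ := rfl
  map_rel_iff' := Iff.rfl

instance Representation.isIrreducible_ofModule' (M : Type*) [AddCommGroup M] [Module k M]
    [Module (MonoidAlgebra k G) M] [IsScalarTower k (MonoidAlgebra k G) M]
    [IsSimpleModule (MonoidAlgebra k G) M] :
    (Representation.ofModule' (k := k) (G := G) M).IsIrreducible :=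
  (Subrepresentation.submoduleOrderIsoOfModule' M).symm.isSimpleOrder

theorem Representation.asAlgebraHom_ofModule' (M : Type*) [AddCommGroup M] [Module k M]
    [Module (MonoidAlgebra k G) M] [IsScalarTower k (MonoidAlgebra k G) M] :
    (Representation.ofModule' (k := k) (G := G) M).asAlgebraHom = Algebra.lsmul k k M :=
  (MonoidAlgebra.lift k _ G).apply_symm_apply _

theorem FDRep.simple_of_isIrreducible_s6 {V : Type u} [AddCommGroup V] [Module k V]
    [FiniteDimensional k V] (ρ : Representation k G V) [ρ.IsIrreducible] :
    Simple (FDRep.of ρ) where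
  mono_isIso_iff_nonzero {Y} f _ := by
    refine ⟨fun _ hf => ?_, fun hf => ?_⟩
    · have : Nontrivial V := IsSimpleModule.nontrivial (MonoidAlgebra k G) ρ.asModule
      obtain ⟨v, hv⟩ := exists_ne (0 : V)
      subst hf
      exact hv (congrArg (fun φ => φ.hom.hom.hom v) (IsIso.inv_hom_id (0 : Y ⟶ FDRep.of ρ))).symm
    · refine (ConcreteCategory.isIso_iff_bijective f).2 ⟨?_, ?_⟩
      · exact (ModuleCat.mono_iff_injective _).1
          (inferInstance : Mono ((forget₂ (FGModuleCat k) _).map ((Action.forget _ _).map f)))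
      · let range : Subrepresentation ρ :=
          ⟨LinearMap.range f.hom.hom.hom, by
            rintro g _ ⟨y, rfl⟩
            exact ⟨Y.ρ g y, congr($(f.comm g).hom y)⟩⟩
        have : range = ⊤ := (eq_bot_or_eq_top range).resolve_left fun h => hf ?_
        · exact LinearMap.range_eq_top.1 (congrArg Subrepresentation.toSubmodule this)
        · ext y
          exact (congrArg Subrepresentation.toSubmodule h).le ⟨y, rfl⟩

end OfModule

theorem IsSimpleModule.exists_smul_eq_smul_of_commute (k : Type*) {A M : Type*} [Field k]
    [IsAlgClosed k] [Ring A] [Algebra k A] [AddCommGroup M] [Module A M] [Module k M]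
    [IsScalarTower k A M] [FiniteDimensional k M] [IsSimpleModule A M] {z : A}
    (hz : ∀ a : A, Commute a z) : ∃ c : k, ∀ m : M, z • m = c • m := by
  let φ : M →ₗ[A] M :=
    { toFun := (z • ·)
      map_add' := smul_add z
      map_smul' a m := by simp only [RingHom.id_apply, smul_smul, (hz a).eq] }
  obtain ⟨c, hc⟩ := (IsSimpleModule.algebraMap_end_bijective_of_isAlgClosed k (A := A)).2 φ
  exact ⟨c, fun m => (LinearMap.congr_fun hc m).symm⟩

section ClassFunction

variable {K : Type} [Group K]

def IsClassFunction {α : Type*} (f : K → α) : Prop :=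
  ∀ x y, f (x * y * x⁻¹) = f y

theorem IsClassFunction.comp_inv {α : Type*} {f : K → α} (hf : IsClassFunction f) :
    IsClassFunction (fun g => f g⁻¹) := fun x y => by
  simpa only [mul_inv_rev, inv_inv, ← mul_assoc] using hf x y⁻¹

theorem IsClassFunction.sub {f₁ f₂ : K → ℂ} (hf₁ : IsClassFunction f₁)
    (hf₂ : IsClassFunction f₂) : IsClassFunction (f₁ - f₂) := fun x y => by
  simp only [Pi.sub_apply, hf₁ x y, hf₂ x y]

variable [Fintype K]

theorem IsClassFunction.commute_sum_single {f : K → ℂ} (hf : IsClassFunction f)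
    (a : MonoidAlgebra ℂ K) : Commute a (∑ g, single g (f g)) := by
  induction a using MonoidAlgebra.induction_linear with
  | zero => exact Commute.zero_left _
  | add a b ha hb => exact ha.add_left hb
  | single x c =>
    simp only [Commute, SemiconjBy, Finset.mul_sum, Finset.sum_mul, single_mul_single]
    refine Fintype.sum_equiv (MulAut.conj x).toEquiv _ _ fun g => ?_
    change single (x * g) (c * f g) = single (x * g * x⁻¹ * x) (f (x * g * x⁻¹) * c)
    rw [hf, inv_mul_cancel_right, mul_comm c]

theorem IsClassFunction.sum_single_smul_eq_zero {f : K → ℂ} (hf : IsClassFunction f)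
    (h0 : ∀ W : FDRep ℂ K, Simple W → ∑ g, f g * W.character g = 0)
    (M : Type) [AddCommGroup M] [Module ℂ M] [Module (MonoidAlgebra ℂ K) M]
    [IsScalarTower ℂ (MonoidAlgebra ℂ K) M] [IsSimpleModule (MonoidAlgebra ℂ K) M] (m : M) :
    (∑ g, single g (f g)) • m = 0 := by
  have : FiniteDimensional ℂ M := Module.Finite.trans (MonoidAlgebra ℂ K) M
  have : Nontrivial M := IsSimpleModule.nontrivial (MonoidAlgebra ℂ K) M
  obtain ⟨c, hc⟩ :=
    IsSimpleModule.exists_smul_eq_smul_of_commute ℂ (M := M) hf.commute_sum_single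
  let ρ := Representation.ofModule' (k := ℂ) (G := K) M
  have hρ : ρ.asAlgebraHom (∑ g, single g (f g)) = c • LinearMap.id := by
    ext m
    rw [Representation.asAlgebraHom_ofModule']
    exact hc m
  have htrace : ∑ g, f g * (FDRep.of ρ).character g = c * Module.finrank ℂ M := by
    have := congrArg (LinearMap.trace ℂ M) hρ
    simpa [map_sum, Representation.asAlgebraHom_single, FDRep.character] using this
  have hc0 : c = 0 := by
    have := (h0 _ (FDRep.simple_of_isIrreducible_s6 ρ)).symm.trans htrace
    simpa [Module.finrank_pos.ne'] using this.symm
  rw [hc, hc0, zero_smul]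

theorem IsClassFunction.eq_zero_of_sum_mul_character_eq_zero {f : K → ℂ}
    (hf : IsClassFunction f)
    (h0 : ∀ W : FDRep ℂ K, Simple W → ∑ g, f g * W.character g = 0) : f = 0 := by
  classical
  set z := ∑ g, single g (f g)
  have hker : (⊤ : Submodule (MonoidAlgebra ℂ K) _) ≤
      LinearMap.ker (LinearMap.toSpanSingleton _ _ z) := by
    rw [← IsSemisimpleModule.sSup_simples_eq_top]
    refine sSup_le fun S (hS : IsSimpleModule _ S) v hv => ?_
    have := congrArg Subtype.val (hf.sum_single_smul_eq_zero h0 S ⟨v, hv⟩)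
    exact (hf.commute_sum_single v).eq.trans (by simpa using this)
  have hz : z = 0 := by simpa using hker Submodule.mem_top (x := 1)
  funext g
  have := congrArg (·.coeff g) hz
  simp only [z, MonoidAlgebra.coeff_sum, MonoidAlgebra.coeff_single] at this
  rw [Finset.sum_apply'] at this
  simpa [Finsupp.single_apply] using this

theorem IsClassFunction.eq_of_sum_mul_character_inv_eq {f₁ f₂ : K → ℂ}
    (hf₁ : IsClassFunction f₁) (hf₂ : IsClassFunction f₂)
    (h : ∀ W : FDRep ℂ K, Simple W →
      ∑ g, f₁ g * W.character g⁻¹ = ∑ g, f₂ g * W.character g⁻¹) : f₁ = f₂ := by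
  have := (hf₁.sub hf₂).comp_inv.eq_zero_of_sum_mul_character_eq_zero fun W hW => by
    rw [← Equiv.sum_comp (Equiv.inv K)]
    simp [sub_mul, Finset.sum_sub_distrib, h W hW]
  funext g
  simpa [sub_eq_zero] using congrFun this g⁻¹

end ClassFunction

section Orthogonality

variable {K ι : Type} [Group K] [Fintype K] (V : ι → FDRep ℂ K)
  (hirr : ∀ i, Simple (V i)) (hdist : ∀ i j, Nonempty (V i ≅ V j) → i = j)
include hirr hdist

open scoped Classical in
theorem sum_character_mul_character_inv (i j : ι) :
    ∑ g, (V i).character g * (V j).character g⁻¹ = if i = j then (Nat.card K : ℂ) else 0 := by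
  have := hirr i
  have := hirr j
  have hK : (Nat.card K : ℂ) ≠ 0 := Nat.cast_ne_zero.2 Nat.card_pos.ne'
  have h := FDRep.char_orthonormal (V i) (V j)
  rw [inv_mul_eq_iff_eq_mul₀ hK, if_congr ⟨hdist i j, fun h => h ▸ ⟨Iso.refl _⟩⟩ rfl rfl] at h
  simpa using h

theorem sum_sum_mul_character_mul_character_inv [Fintype ι] (c : ι → ℂ) (j : ι) :
    ∑ g, (∑ i, c i * (V i).character g) * (V j).character g⁻¹ = c j * Nat.card K := by
  classical
  simp only [Finset.sum_mul, mul_assoc]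
  rw [Finset.sum_comm]
  simp only [← Finset.mul_sum, sum_character_mul_character_inv V hirr hdist, mul_ite, mul_zero]
  exact Fintype.sum_ite_eq' j _

end Orthogonality

section Conjugation

variable {G : Type} [Group G]

theorem isConj_inv_left_iff {a b : G} : IsConj a⁻¹ b ↔ IsConj a b⁻¹ := by
  simp only [isConj_iff, ← conj_inv, inv_eq_iff_eq_inv]

theorem Subgroup.centralizer_singleton_inv (g : G) :
    Subgroup.centralizer {g⁻¹} = Subgroup.centralizer {g} := by
  ext x
  simp only [Subgroup.mem_centralizer_singleton_iff]
  exact Commute.inv_right_iff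

variable [Fintype G] [DecidableEq G]

theorem card_filter_conj_eq (g k : G) :
    #{x | x⁻¹ * g * x = k} = if IsConj g k then Nat.card (Subgroup.centralizer {g}) else 0 := by
  split_ifs with hk
  · obtain ⟨y, rfl⟩ := isConj_iff.1 hk
    rw [← Fintype.card_subtype, ← Nat.card_eq_fintype_card]
    refine Nat.card_congr ((Equiv.mulRight y).subtypeEquiv fun x => ?_)
    rw [Equiv.coe_mulRight, Subgroup.mem_centralizer_singleton_iff]
    constructor <;> intro h
    · calc x * y * g = x * (y * g * y⁻¹) * y := by group
        _ = x * (x⁻¹ * g * x) * y := by rw [h]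
        _ = g * (x * y) := by group
    · calc x⁻¹ * g * x = x⁻¹ * (g * (x * y)) * y⁻¹ := by group
        _ = x⁻¹ * (x * y * g) * y⁻¹ := by rw [h]
        _ = y * g * y⁻¹ := by group
  · refine Finset.card_eq_zero.2 (Finset.filter_eq_empty_iff.2 fun x _ hx => hk ?_)
    exact isConj_iff.2 ⟨x⁻¹, by rw [← hx]; group⟩

theorem sum_conj_eq_card_centralizer_nsmul {M : Type*} [AddCommMonoid M] (φ : G → M) (g : G) :
    ∑ x, φ (x⁻¹ * g * x) = Nat.card (Subgroup.centralizer {g}) • ∑ k with IsConj g k, φ k := by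
  rw [← Finset.sum_fiberwise Finset.univ (fun x => x⁻¹ * g * x), Finset.sum_filter,
    Finset.smul_sum]
  refine Finset.sum_congr rfl fun k _ => ?_
  rw [Finset.sum_congr rfl fun x hx => congrArg φ (Finset.mem_filter.1 hx).2, Finset.sum_const,
    card_filter_conj_eq]
  split_ifs <;> simp

theorem isClassFunction_ite_isConj (H : Subgroup G) (γ : G) :
    IsClassFunction (fun h : H => if IsConj γ h then (1 : ℂ) else 0) := fun x y => by
  have hconj : IsConj (y : G) (x * y * x⁻¹ : H) := isConj_iff.2 ⟨x, rfl⟩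
  exact if_congr ⟨fun h => h.trans hconj.symm, fun h => h.trans hconj⟩ rfl rfl

theorem sum_ite_isConj_mul_inv (H : Subgroup G) [Fintype H] (γ : G) (χ : H → ℂ) :
    ∑ h : H, (if IsConj γ h then 1 else 0) * χ h⁻¹ = ∑ h : H, if IsConj γ⁻¹ h then χ h else 0 := by
  rw [← Equiv.sum_comp (Equiv.inv H)]
  simp only [Equiv.inv_apply, inv_inv, Subgroup.coe_inv, ite_mul, one_mul, zero_mul,
    ← isConj_inv_left_iff]

end Conjugation

theorem inducedCharacter_eq_sum_isConj {G : Type} [Group G] [Fintype G] [DecidableEq G]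
    (H : Subgroup G) [Fintype H] (χ : H → ℂ) (g : G) :
    inducedCharacter H χ g = (Nat.card H : ℂ)⁻¹ * Nat.card (Subgroup.centralizer {g}) *
      ∑ h : H, if IsConj g h then χ h else 0 := by
  classical
  rw [inducedCharacter,
    sum_conj_eq_card_centralizer_nsmul (fun k => if hk : k ∈ H then χ ⟨k, hk⟩ else 0),
    nsmul_eq_mul, mul_assoc]
  congr 2
  rw [Finset.sum_filter, ← Fintype.sum_subtype_add_sum_subtype (· ∈ H)]
  rw [add_eq_left.2 (Fintype.sum_eq_zero _ fun k => by simp [k.2])]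
  refine Finset.sum_congr (by congr!) fun h _ => by simp [h.2]

/-- The restriction to a subgroup `H ≤ G` of the indicator function of the `G`-conjugacy
class of `γ` has Fourier expansion
`δ_{O(γ)}|_H = |C(γ)|⁻¹ ∑_{ρ ∈ Irr(H)} χ_ρ · Tr(Ind_H^G(ρ)(γ⁻¹))`. -/
theorem stmt_6 {G : Type} [Group G] [Fintype G] [DecidableEq G]
    (H : Subgroup G) (γ : G)
    {ι : Type} [Fintype ι] (V : ι → FDRep ℂ H)
    (hirr : ∀ i, CategoryTheory.Simple (V i))
    (hdist : ∀ i j, Nonempty (V i ≅ V j) → i = j)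
    (hcomplete : ∀ W : FDRep ℂ H, CategoryTheory.Simple W → ∃ i, Nonempty (W ≅ V i)) :
    ∀ h : H,
      (if ∃ g : G, g * γ * g⁻¹ = (h : G) then (1 : ℂ) else 0)
        = (Nat.card (Subgroup.centralizer {γ} : Subgroup G) : ℂ)⁻¹ *
          ∑ i, (V i).character h *
            inducedCharacter H (fun x => (V i).character x) γ⁻¹ := by
  classical
  set c : ι → ℂ := fun i => (Nat.card (Subgroup.centralizer {γ}) : ℂ)⁻¹ *
    inducedCharacter H (fun x => (V i).character x) γ⁻¹
  suffices (fun h : H => if IsConj γ h then (1 : ℂ) else 0) =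
      fun h => ∑ i, c i * (V i).character h by
    intro h
    convert congrFun this h using 1
    · simp only [isConj_iff]
    · rw [Finset.mul_sum]
      exact Finset.sum_congr rfl fun i _ => by ring
  refine IsClassFunction.eq_of_sum_mul_character_inv_eq (isClassFunction_ite_isConj H γ)
    (fun x y => by simp only [FDRep.char_conj]) fun W hW => ?_
  obtain ⟨j, ⟨e⟩⟩ := hcomplete W hW
  have hC : (Nat.card (Subgroup.centralizer {γ}) : ℂ) ≠ 0 := Nat.cast_ne_zero.2 Nat.card_pos.ne'
  have hH : (Nat.card H : ℂ) ≠ 0 := Nat.cast_ne_zero.2 Nat.card_pos.ne'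
  rw [FDRep.char_iso e, sum_sum_mul_character_mul_character_inv V hirr hdist,
    sum_ite_isConj_mul_inv]
  simp only [c, inducedCharacter_eq_sum_isConj, Subgroup.centralizer_singleton_inv]
  field_simp
end

section
/- The number of non-identity involutions in GL(2,𝔽_q) is q²−1 when q is even, and q²+q+1 when q is odd. -/
/-!
By Cayley–Hamilton, a `2 × 2` matrix over a field squares to `1` iff it is `±1` or has trace `0`
and determinant `-1`. The latter matrices are `!![a, b; c, -a]` with `a² + bc = 1`; counting the
pairs `(b, c)` with `bc = 1 - a²` for each `a` gives `q(q - 1) + q · #{a | a² = 1}` of them. In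
characteristic `2` we have `1 = -1` with trace `0` and determinant `-1`, so there are `q²`
involutions; otherwise there are `q² + q + 2`, including `1`.
-/

open Finset Matrix

def unitsInvolutionEquiv {M : Type*} [Monoid M] :
    {u : Mˣ // u * u = 1 ∧ u ≠ 1} ≃ {m : M // m * m = 1 ∧ m ≠ 1} where
  toFun u :=
    ⟨(u.1 : M), by rw [← Units.val_mul, u.2.1, Units.val_one], Units.val_eq_one.not.mpr u.2.2⟩
  invFun m := ⟨⟨m.1, m.1, m.2.1, m.2.1⟩, Units.ext m.2.1, fun h => m.2.2 (congrArg Units.val h)⟩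
  left_inv u := Subtype.ext (Units.ext rfl)
  right_inv _ := rfl

theorem Matrix.mul_self_eq_one_iff_fin_two {K : Type*} [Field K] (M : Matrix (Fin 2) (Fin 2) K) :
    M * M = 1 ↔ M = 1 ∨ M = -1 ∨ (M.trace = 0 ∧ M.det = -1) := by
  rw [M.eta_fin_two]
  generalize M 0 0 = a, M 0 1 = b, M 1 0 = c, M 1 1 = d
  simp only [mul_fin_two, one_fin_two, neg_of, neg_cons, neg_zero, neg_empty, trace_fin_two_of,
    det_fin_two_of, EmbeddingLike.apply_eq_iff_eq, vecCons_inj, and_true]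
  constructor
  · rintro ⟨⟨h11, h12⟩, h21, h22⟩
    by_cases ht : a + d = 0
    · exact Or.inr (Or.inr ⟨ht, by linear_combination a * ht - h11⟩)
    have hb : b = 0 :=
      (mul_eq_zero.mp (by linear_combination h12 : b * (a + d) = 0)).resolve_right ht
    have hc : c = 0 :=
      (mul_eq_zero.mp (by linear_combination h21 : c * (a + d) = 0)).resolve_right ht
    have hda : d = a := (sub_eq_zero.mp
      ((mul_eq_zero.mp (by linear_combination h22 - h11 : (d - a) * (a + d) = 0)).resolve_right ht))
    subst hb hc hda
    rcases mul_self_eq_one_iff.mp (by simpa using h11) with rfl | rfl <;> simp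
  · rintro (⟨⟨rfl, rfl⟩, rfl, rfl⟩ | ⟨⟨rfl, rfl⟩, rfl, rfl⟩ | ⟨ht, hdet⟩)
    · norm_num
    · norm_num
    · obtain rfl : d = -a := by linear_combination ht
      exact ⟨⟨by linear_combination -hdet, by ring⟩, by ring, by linear_combination -hdet⟩

section Counting

variable {F : Type*} [Field F] [Fintype F] [DecidableEq F]

theorem card_filter_mul_eq (t : F) :
    #{p : F × F | p.1 * p.2 = t}
      = Fintype.card F - 1 + if t = 0 then Fintype.card F else 0 := by
  have hunit (b : F) (hb : b ≠ 0) : ∑ c : F, (if b * c = t then 1 else 0) = 1 := by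
    simp_rw [← eq_inv_mul_iff_mul_eq₀ hb]
    simp
  rw [card_filter, Fintype.sum_prod_type, ← add_sum_erase _ _ (mem_univ 0), add_comm,
    sum_congr rfl fun b hb => hunit b (ne_of_mem_erase hb)]
  simp [eq_comm, apply_ite]

theorem card_filter_mul_self_add_mul_eq (s : F) :
    #{p : F × F × F | p.1 * p.1 + p.2.1 * p.2.2 = s}
      = Fintype.card F * (Fintype.card F - 1) + Fintype.card F * #{a : F | a * a = s} := by
  rw [card_filter, Fintype.sum_prod_type]
  simp_rw [← eq_sub_iff_add_eq', ← card_filter, card_filter_mul_eq, sub_eq_zero, eq_comm (a := s)]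
  rw [sum_add_distrib, sum_const, sum_ite, sum_const, sum_const_zero, card_univ, smul_eq_mul,
    smul_eq_mul]
  ring

theorem card_filter_mul_self_eq_one : #{a : F | a * a = 1} = if ringChar F = 2 then 1 else 2 := by
  have : ({a : F | a * a = 1} : Finset F) = {1, -1} := by
    ext a; simp [mul_self_eq_one_iff]
  rw [this]
  by_cases h : (-1 : F) = 1
  · simp [h, neg_one_eq_one_iff.mp h]
  · rw [if_neg (mt neg_one_eq_one_iff.mpr h), card_pair (Ne.symm h)]

theorem card_filter_trace_eq_zero_det_eq (δ : F) :
    #{M : Matrix (Fin 2) (Fin 2) F | M.trace = 0 ∧ M.det = δ}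
      = #{p : F × F × F | p.1 * p.1 + p.2.1 * p.2.2 = -δ} := by
  refine card_nbij' (fun M => (M 0 0, M 0 1, M 1 0)) (fun p => !![p.1, p.2.1; p.2.2, -p.1])
    ?_ ?_ ?_ ?_
  · intro M hM
    simp only [coe_filter, mem_univ, true_and, Set.mem_ofPred_eq, trace_fin_two, det_fin_two]
      at hM ⊢
    obtain ⟨ht, rfl⟩ := hM
    linear_combination M 0 0 * ht
  · intro p hp
    simp only [coe_filter, mem_univ, true_and, Set.mem_ofPred_eq, trace_fin_two_of,
      det_fin_two_of] at hp ⊢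
    exact ⟨add_neg_cancel _, by linear_combination -hp⟩
  · intro M hM
    simp only [coe_filter, mem_univ, true_and, Set.mem_ofPred_eq, trace_fin_two] at hM
    conv_rhs => rw [eta_fin_two M, eq_neg_of_add_eq_zero_right hM.1]
  · intro p _
    simp

theorem card_filter_mul_self_eq_one_ne_one_fin_two :
    #{M : Matrix (Fin 2) (Fin 2) F | M * M = 1 ∧ M ≠ 1}
      = if ringChar F = 2 then Fintype.card F ^ 2 - 1
        else Fintype.card F ^ 2 + Fintype.card F + 1 := by
  set T : Finset (Matrix (Fin 2) (Fin 2) F) := {M | M.trace = 0 ∧ M.det = -1}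
  have hT : #T = Fintype.card F * (Fintype.card F - 1)
      + Fintype.card F * (if ringChar F = 2 then 1 else 2) := by
    rw [card_filter_trace_eq_zero_det_eq, neg_neg, card_filter_mul_self_add_mul_eq,
      card_filter_mul_self_eq_one]
  have hinv : ({M | M * M = 1} : Finset (Matrix (Fin 2) (Fin 2) F))
      = insert 1 (insert (-1) T) := by
    ext M; simp [mul_self_eq_one_iff_fin_two, T]
  have hne : ({M | M * M = 1 ∧ M ≠ 1} : Finset (Matrix (Fin 2) (Fin 2) F))
      = ({M | M * M = 1} : Finset _).erase 1 := by
    ext M; simp [and_comm]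
  rw [hne, hinv, erase_insert_eq_erase]
  obtain ⟨k, hk⟩ : ∃ k, Fintype.card F = k + 1 :=
    ⟨_, (Nat.succ_pred_eq_of_pos Fintype.card_pos).symm⟩
  have htrace_one : (1 : Matrix (Fin 2) (Fin 2) F).trace = 2 := by simp
  split_ifs at hT ⊢ with h2
  · have hF : (-1 : F) = 1 := neg_one_eq_one_iff.mpr h2
    have hneg : (-1 : Matrix (Fin 2) (Fin 2) F) = 1 := by
      simpa only [map_neg, map_one] using congrArg (scalar (Fin 2)) hF
    have hone : (1 : Matrix (Fin 2) (Fin 2) F) ∈ T := by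
      simp [T, htrace_one, hF, show (2 : F) = 0 by linear_combination -hF]
    rw [hneg, insert_eq_of_mem hone, card_erase_of_mem hone, hT, hk, Nat.add_sub_cancel]
    ring_nf
  · have hone : (1 : Matrix (Fin 2) (Fin 2) F) ∉ insert (-1) T := by
      have hF : (1 : F) ≠ -1 := (Ring.neg_one_ne_one_of_char_ne_two h2).symm
      have h1 : (1 : Matrix (Fin 2) (Fin 2) F) ≠ -1 :=
        fun h => hF (by simpa using congrFun₂ h 0 0)
      simp [T, htrace_one, Ring.two_ne_zero h2, h1]
    have hneg : (-1 : Matrix (Fin 2) (Fin 2) F) ∉ T := by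
      simp [T, htrace_one, Ring.two_ne_zero h2]
    rw [erase_eq_of_notMem hone, card_insert_of_notMem hneg, hT, hk, Nat.add_sub_cancel]
    ring

end Counting

/-- The number of non-identity involutions in `GL(2,𝔽_q)` is `q² − 1` when `q` is even
and `q² + q + 1` when `q` is odd. -/
theorem stmt_8 {F : Type} [Field F] [Fintype F] [DecidableEq F] (q : ℕ)
    (hq : Fintype.card F = q) :
    Nat.card {A : GL (Fin 2) F // A * A = 1 ∧ A ≠ 1}
      = if Even q then q ^ 2 - 1 else q ^ 2 + q + 1 := by
  subst hq
  rw [Nat.card_congr unitsInvolutionEquiv, Nat.card_eq_fintype_card, Fintype.card_subtype,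
    card_filter_mul_self_eq_one_ne_one_fin_two]
  simp only [Nat.even_iff, FiniteField.even_card_iff_char_two]
end

section
/- Let 𝔼 = 𝔽_{q²} ⊇ 𝔽 = 𝔽_q and let x ∈ 𝔽^×. The sum of ν(x) over a set of representatives ν of equivalence classes {ν, ν^q} of characters of 𝔼^× that do not factor through the norm equals (1/2)(q²−1)·δ(x=1) − (1/2)(q−1)·δ(x²=1). -/
open Finset

private lemma finite_hom_aux (G : Type*) [CommGroup G] [Finite G] : Finite (G →* ℂˣ) := by
  haveI : NeZero ((Monoid.exponent G : ℂ)) := ⟨Nat.cast_ne_zero.mpr (NeZero.ne _)⟩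
  obtain ⟨e⟩ := CommGroup.monoidHom_mulEquiv_of_hasEnoughRootsOfUnity G ℂ
  exact Finite.of_equiv G e.symm.toEquiv

private lemma card_hom_aux (G : Type*) [CommGroup G] [Finite G] :
    Nat.card (G →* ℂˣ) = Nat.card G := by
  haveI : NeZero ((Monoid.exponent G : ℂ)) := ⟨Nat.cast_ne_zero.mpr (NeZero.ne _)⟩
  obtain ⟨e⟩ := CommGroup.monoidHom_mulEquiv_of_hasEnoughRootsOfUnity G ℂ
  exact Nat.card_congr e.toEquiv

private lemma sum_hom_aux (G : Type*) [CommGroup G] [Finite G] [Fintype (G →* ℂˣ)]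
    [DecidableEq G] (x : G) :
    ∑ χ : G →* ℂˣ, ((χ x : ℂˣ) : ℂ) = if x = 1 then (Nat.card G : ℂ) else 0 := by
  split_ifs with h
  · subst h
    simp only [map_one, Units.val_one]
    rw [Finset.sum_const, Finset.card_univ, ← Nat.card_eq_fintype_card, card_hom_aux,
      nsmul_eq_mul, mul_one]
  · haveI : NeZero ((Monoid.exponent G : ℂ)) := ⟨Nat.cast_ne_zero.mpr (NeZero.ne _)⟩
    obtain ⟨φ, hφ⟩ := CommGroup.exists_apply_ne_one_of_hasEnoughRootsOfUnity G ℂ h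
    have key : ∑ χ : G →* ℂˣ, (((φ * χ) x : ℂˣ) : ℂ) = ∑ χ : G →* ℂˣ, ((χ x : ℂˣ) : ℂ) :=
      Fintype.sum_equiv (Equiv.mulLeft φ) _ _ (fun χ => rfl)
    simp only [MonoidHom.mul_apply, Units.val_mul] at key
    rw [← Finset.mul_sum] at key
    have hφ1 : ((φ x : ℂˣ) : ℂ) ≠ 1 := fun hh => hφ (Units.ext (by simpa using hh))
    have h0 : (((φ x : ℂˣ) : ℂ) - 1) * ∑ χ : G →* ℂˣ, ((χ x : ℂˣ) : ℂ) = 0 := by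
      linear_combination key
    rcases mul_eq_zero.mp h0 with h1 | h2
    · exact absurd (sub_eq_zero.mp h1) hφ1
    · exact h2

private lemma card_pow_eq_one_aux {G : Type*} [Group G] [Fintype G] [IsCyclic G] [DecidableEq G]
    {m : ℕ} (hm : 0 < m) (hdvd : m ∣ Fintype.card G) :
    (Finset.univ.filter fun y : G => y ^ m = 1).card = m := by
  refine le_antisymm (IsCyclic.card_pow_eq_one_le hm) ?_
  obtain ⟨g, hg⟩ := IsCyclic.exists_generator (α := G)
  have hog : orderOf g = Fintype.card G := by
    rw [orderOf_eq_card_of_forall_mem_zpowers hg, Nat.card_eq_fintype_card]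
  set a := g ^ (Fintype.card G / m) with ha
  have hoa : orderOf a = m := by
    rw [ha, orderOf_pow, hog,
      Nat.gcd_eq_right (Nat.div_dvd_of_dvd hdvd), Nat.div_div_self hdvd Fintype.card_ne_zero]
  have ham : a ^ m = 1 := by rw [← hoa]; exact pow_orderOf_eq_one a
  calc m = (Finset.range m).card := (Finset.card_range m).symm
    _ ≤ _ := by
        refine Finset.card_le_card_of_injOn (fun i => a ^ i) (fun i hi => ?_) ?_
        · refine Finset.mem_filter.mpr ⟨Finset.mem_univ _, ?_⟩
          rw [← pow_mul, mul_comm, pow_mul, ham, one_pow]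
        · intro i hi j hj hij
          exact pow_injOn_Iio_orderOf (by simpa [hoa] using Finset.mem_range.mp hi)
            (by simpa [hoa] using Finset.mem_range.mp hj) hij

open scoped Classical in
/-- Let `𝔼 = 𝔽_{q²}` and `x ∈ 𝔽_q^× ⊆ 𝔼^×` (i.e. `x^q = x`).  If `S` is a set of
representatives of the pairs `{ν, ν^q}` of primitive characters of `𝔼^×` (those with
`ν^q ≠ ν`, i.e. not factoring through the norm), then
`∑_{ν ∈ S} ν(x) = ½(q²−1)δ(x=1) − ½(q−1)δ(x²=1)`. -/
theorem stmt_15 {E : Type} [Field E] [Fintype E] (q : ℕ) (hq : Fintype.card E = q ^ 2)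
    (S : Finset (Eˣ →* ℂˣ))
    (hS1 : ∀ ν ∈ S, ν.comp (powMonoidHom q) ≠ ν)
    (hS2 : ∀ ν : Eˣ →* ℂˣ, ν.comp (powMonoidHom q) ≠ ν →
      (ν ∈ S ↔ ν.comp (powMonoidHom q) ∉ S))
    (x : Eˣ) (hx : (x : E) ^ q = (x : E)) :
    ∑ ν ∈ S, ((ν x : ℂˣ) : ℂ)
      = (1 / 2) * ((q : ℂ) ^ 2 - 1) * (if x = 1 then 1 else 0)
        - (1 / 2) * ((q : ℂ) - 1) * (if x ^ 2 = 1 then 1 else 0) := by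
  classical
  haveI : Finite (Eˣ →* ℂˣ) := finite_hom_aux Eˣ
  haveI : Fintype (Eˣ →* ℂˣ) := Fintype.ofFinite _
  -- basic numerology
  have hq2 : 2 ≤ q := by
    by_contra h
    push_neg at h
    have h2 : 1 < Fintype.card E := Fintype.one_lt_card
    rw [hq] at h2
    interval_cases q <;> simp_all
  have hsq : q ^ 2 = q * q := sq q
  have hcardU : Fintype.card Eˣ = q ^ 2 - 1 := by rw [Fintype.card_units, hq]
  -- x is fixed by the q-power map
  have hxu : x ^ q = x := Units.ext (by rw [Units.val_pow_eq_pow_val]; exact hx)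
  have hx1 : x ^ (q - 1) = 1 := by
    have h1 : x ^ (q - 1) * x = x := by
      rw [← pow_succ, Nat.sub_add_cancel (by omega)]
      exact hxu
    exact mul_right_cancel (h1.trans (one_mul x).symm)
  -- the twisting involution
  set c : (Eˣ →* ℂˣ) → (Eˣ →* ℂˣ) := fun ν => ν.comp (powMonoidHom q) with hc
  have hcapp : ∀ (ν : Eˣ →* ℂˣ) (y : Eˣ), c ν y = ν (y ^ q) := fun ν y => rfl
  have hyq2 : ∀ y : Eˣ, y ^ (q * q) = y := by
    intro y
    have h1 : y ^ (q ^ 2 - 1) = 1 := by rw [← hcardU]; exact pow_card_eq_one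
    calc y ^ (q * q) = y ^ (q ^ 2 - 1) * y := by
          rw [← pow_succ, Nat.sub_add_cancel (by nlinarith), hsq]
      _ = y := by rw [h1, one_mul]
  have hcc : ∀ ν, c (c ν) = ν := by
    intro ν
    ext y
    rw [hcapp, hcapp, ← pow_mul, hyq2]
  have hvalx : ∀ ν : Eˣ →* ℂˣ, c ν x = ν x := fun ν => by rw [hcapp, hxu]
  -- the sets
  set P : Finset (Eˣ →* ℂˣ) := Finset.univ.filter fun ν => c ν ≠ ν with hP
  set Fx : Finset (Eˣ →* ℂˣ) := Finset.univ.filter fun ν => c ν = ν with hFx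
  have hsplit : ∑ ν ∈ Fx, ((ν x : ℂˣ) : ℂ) + ∑ ν ∈ P, ((ν x : ℂˣ) : ℂ)
      = ∑ ν : Eˣ →* ℂˣ, ((ν x : ℂˣ) : ℂ) :=
    Finset.sum_filter_add_sum_filter_not _ _ _
  -- P is the disjoint union of S and its image under c
  have hT : ∑ ν ∈ S.image c, ((ν x : ℂˣ) : ℂ) = ∑ ν ∈ S, ((ν x : ℂˣ) : ℂ) := by
    rw [Finset.sum_image (fun a _ b _ h => by rw [← hcc a, h, hcc])]
    exact Finset.sum_congr rfl fun ν _ => by rw [hvalx]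
  have hdisj : Disjoint S (S.image c) := by
    rw [Finset.disjoint_left]
    intro ν hν hν'
    obtain ⟨μ, hμ, rfl⟩ := Finset.mem_image.mp hν'
    exact (hS2 μ (hS1 μ hμ)).mp hμ hν
  have hunion : S ∪ S.image c = P := by
    ext ν
    simp only [hP, Finset.mem_union, Finset.mem_image, Finset.mem_filter, Finset.mem_univ,
      true_and]
    constructor
    · rintro (h | ⟨μ, hμ, rfl⟩)
      · exact hS1 ν h
      · intro hcontra
        exact hS1 μ hμ (((hcc μ).symm.trans hcontra).symm)
    · intro h
      by_cases hν : ν ∈ S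
      · exact Or.inl hν
      · exact Or.inr ⟨c ν, not_not.mp (fun hh => hν ((hS2 ν h).mpr hh)), hcc ν⟩
  have hPsum : ∑ ν ∈ P, ((ν x : ℂˣ) : ℂ) = 2 * ∑ ν ∈ S, ((ν x : ℂˣ) : ℂ) := by
    rw [← hunion, Finset.sum_union hdisj, hT]
    ring
  -- total sum
  have hA : ∑ ν : Eˣ →* ℂˣ, ((ν x : ℂˣ) : ℂ)
      = if x = 1 then ((q : ℂ) ^ 2 - 1) else 0 := by
    rw [sum_hom_aux]
    congr 1
    rw [Nat.card_eq_fintype_card, hcardU]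
    push_cast [Nat.cast_sub (by nlinarith : 1 ≤ q ^ 2)]
    ring
  -- the subgroup H of (q-1)-st powers
  set f : Eˣ →* Eˣ := powMonoidHom (q - 1) with hf
  set H : Subgroup Eˣ := f.range with hH
  -- characters fixed by c are exactly those trivial on H
  have hFixIff : ∀ ν : Eˣ →* ℂˣ, c ν = ν ↔ ∀ y : Eˣ, ν y ^ (q - 1) = 1 := by
    intro ν
    constructor
    · intro h y
      have := DFunLike.congr_fun h y
      rw [hcapp, map_pow] at this
      have h2 : ν y ^ (q - 1) * ν y = ν y := by
        rw [← pow_succ, Nat.sub_add_cancel (by omega)]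
        exact this
      exact mul_right_cancel (h2.trans (one_mul (ν y)).symm)
    · intro h
      refine MonoidHom.ext fun y => ?_
      rw [hcapp, map_pow]
      calc ν y ^ q = ν y ^ (q - 1) * ν y := by
            rw [← pow_succ, Nat.sub_add_cancel (by omega)]
        _ = ν y := by rw [h y, one_mul]
  have hHker : ∀ ν : Eˣ →* ℂˣ, (∀ y : Eˣ, ν y ^ (q - 1) = 1) ↔ H ≤ ν.ker := by
    intro ν
    constructor
    · rintro h z ⟨y, rfl⟩
      rw [MonoidHom.mem_ker, hf, powMonoidHom_apply, map_pow]
      exact h y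
    · intro h y
      have : f y ∈ ν.ker := h ⟨y, rfl⟩
      rwa [MonoidHom.mem_ker, hf, powMonoidHom_apply, map_pow] at this
  -- the quotient group
  haveI : H.Normal := Subgroup.normal_of_comm H
  haveI : Finite ((Eˣ ⧸ H) →* ℂˣ) := finite_hom_aux (Eˣ ⧸ H)
  haveI : Fintype ((Eˣ ⧸ H) →* ℂˣ) := Fintype.ofFinite _
  set Φ : ((Eˣ ⧸ H) →* ℂˣ) → (Eˣ →* ℂˣ) := fun χ => χ.comp (QuotientGroup.mk' H) with hΦ
  have hΦinj : Function.Injective Φ := by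
    intro χ₁ χ₂ h
    refine MonoidHom.ext fun z => ?_
    obtain ⟨y, rfl⟩ := QuotientGroup.mk'_surjective H z
    exact DFunLike.congr_fun h y
  have hFxImage : Fx = Finset.image Φ Finset.univ := by
    ext ν
    simp only [hFx, Finset.mem_filter, Finset.mem_univ, true_and, Finset.mem_image]
    constructor
    · intro h
      have hker : H ≤ ν.ker := (hHker ν).mp ((hFixIff ν).mp h)
      exact ⟨QuotientGroup.lift H ν hker, MonoidHom.ext fun y => rfl⟩
    · rintro ⟨χ, -, rfl⟩
      refine (hFixIff _).mpr fun y => ?_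
      have hmem : y ^ (q - 1) ∈ H := ⟨y, rfl⟩
      have hq1 : QuotientGroup.mk' H (y ^ (q - 1)) = 1 :=
        (QuotientGroup.eq_one_iff _).mpr hmem
      have h2 : (Φ χ) (y ^ (q - 1)) = 1 := by
        show χ (QuotientGroup.mk' H (y ^ (q - 1))) = 1
        rw [hq1, map_one]
      rwa [map_pow] at h2
  -- counting solutions of y^m = 1
  have hcount : ∀ m : ℕ, 0 < m → m ∣ q ^ 2 - 1 →
      Nat.card (MonoidHom.ker (powMonoidHom m : Eˣ →* Eˣ)) = m := by
    intro m hm hdvd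
    rw [Nat.card_eq_fintype_card, Fintype.card_subtype]
    have hfe : (Finset.univ.filter fun y : Eˣ => y ∈ MonoidHom.ker (powMonoidHom m : Eˣ →* Eˣ))
        = Finset.univ.filter fun y : Eˣ => y ^ m = 1 :=
      Finset.filter_congr fun y _ => by
        simp [MonoidHom.mem_ker, powMonoidHom_apply]
    rw [hfe]
    exact card_pow_eq_one_aux hm (by rw [hcardU]; exact hdvd)
  have hmul : (q - 1) * (q + 1) = q ^ 2 - 1 := by
    obtain ⟨k, rfl⟩ : ∃ k, q = k + 2 := ⟨q - 2, by omega⟩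
    have e0 : (k + 2) ^ 2 = k * k + 4 * k + 4 := by ring
    have e1 : k + 2 - 1 = k + 1 := by omega
    have e2 : (k + 1) * (k + 2 + 1) = k * k + 4 * k + 3 := by ring
    rw [e0, e1, e2]
    omega
  -- cardinalities
  have hcardkerf : Nat.card (MonoidHom.ker f) = q - 1 :=
    hcount (q - 1) (by omega) ⟨q + 1, hmul.symm⟩
  have hcardEx : Nat.card Eˣ = q ^ 2 - 1 := by rw [Nat.card_eq_fintype_card, hcardU]
  have hcardH : Nat.card H = q + 1 := by
    have h1 : Nat.card H = Nat.card (Eˣ ⧸ MonoidHom.ker f) :=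
      Nat.card_congr (QuotientGroup.quotientKerEquivRange f).symm.toEquiv
    have h2 : Nat.card Eˣ = Nat.card (Eˣ ⧸ MonoidHom.ker f) * Nat.card (MonoidHom.ker f) :=
      Subgroup.card_eq_card_quotient_mul_card_subgroup _
    rw [hcardkerf, hcardEx, ← h1] at h2
    have h3 : Nat.card H * (q - 1) = (q + 1) * (q - 1) := by
      rw [← h2, mul_comm (q + 1), hmul]
    exact Nat.eq_of_mul_eq_mul_right (by omega) h3
  have hcardQ : Nat.card (Eˣ ⧸ H) = q - 1 := by
    have h2 : Nat.card Eˣ = Nat.card (Eˣ ⧸ H) * Nat.card H :=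
      Subgroup.card_eq_card_quotient_mul_card_subgroup H
    rw [hcardEx, hcardH] at h2
    have h3 : Nat.card (Eˣ ⧸ H) * (q + 1) = (q - 1) * (q + 1) := by rw [← h2, hmul]
    exact Nat.eq_of_mul_eq_mul_right (by omega) h3
  -- H is the kernel of the (q+1)-st power map
  have hHeq : H = MonoidHom.ker (powMonoidHom (q + 1) : Eˣ →* Eˣ) := by
    refine Subgroup.eq_of_le_of_card_ge ?_ ?_
    · rintro z ⟨y, rfl⟩
      rw [MonoidHom.mem_ker, powMonoidHom_apply, hf, powMonoidHom_apply, ← pow_mul, hmul,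
        ← hcardU]
      exact pow_card_eq_one
    · rw [hcardH, hcount (q + 1) (by omega) ⟨q - 1, by rw [← hmul]; ring⟩]
  -- membership of x in H
  have hxH : x ∈ H ↔ x ^ 2 = 1 := by
    rw [hHeq, MonoidHom.mem_ker, powMonoidHom_apply]
    have : x ^ (q + 1) = x ^ 2 := by
      calc x ^ (q + 1) = x ^ (q - 1) * x ^ 2 := by rw [← pow_add]; congr 1; omega
        _ = x ^ 2 := by rw [hx1, one_mul]
    rw [this]
  -- the fixed-character sum
  have hB : ∑ ν ∈ Fx, ((ν x : ℂˣ) : ℂ)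
      = if x ^ 2 = 1 then ((q : ℂ) - 1) else 0 := by
    rw [hFxImage, Finset.sum_image (fun a _ b _ h => hΦinj h)]
    have h1 : ∑ χ : (Eˣ ⧸ H) →* ℂˣ, (((Φ χ) x : ℂˣ) : ℂ)
        = if (QuotientGroup.mk' H x : Eˣ ⧸ H) = 1 then ((Nat.card (Eˣ ⧸ H) : ℕ) : ℂ) else 0 :=
      sum_hom_aux (Eˣ ⧸ H) (QuotientGroup.mk' H x)
    rw [h1, hcardQ]
    have hone : ((QuotientGroup.mk' H x : Eˣ ⧸ H) = 1) ↔ x ^ 2 = 1 := by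
      rw [← hxH]
      exact QuotientGroup.eq_one_iff x
    by_cases h : x ^ 2 = 1
    · rw [if_pos (hone.mpr h), if_pos h]
      push_cast [Nat.cast_sub (by omega : 1 ≤ q)]
      ring
    · rw [if_neg (fun hh => h (hone.mp hh)), if_neg h]
  -- put everything together
  have hkey : (if x = 1 then ((q : ℂ) ^ 2 - 1) else 0)
      = (if x ^ 2 = 1 then ((q : ℂ) - 1) else 0) + 2 * ∑ ν ∈ S, ((ν x : ℂˣ) : ℂ) := by
    rw [← hA, ← hsplit, hB, hPsum]
  split_ifs at hkey ⊢ with h1 h2 h2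
  · linear_combination -hkey / 2
  · exact absurd (by rw [h1, one_pow]) h2
  · linear_combination -hkey / 2
  · linear_combination -hkey / 2
end

section
/- For GL(2,𝔽_q), the principal series representations satisfy the multiplicity formula ⟨I(μ₁,μ₂) I(ν₁,ν₂) I(ρ₁,ρ₂)⟩ = δ(μ₁ν₁ρ₁μ₂ν₂ρ₂=1) + δ(μ₁ν₁ρ₁=1)δ(μ₂ν₂ρ₂=1) + δ(μ₂ν₁ρ₁=1)δ(μ₁ν₂ρ₂=1) + δ(μ₁ν₂ρ₁=1)δ(μ₂ν₁ρ₂=1) + δ(μ₁ν₁ρ₂=1)δ(μ₂ν₂ρ₁=1), where ⟨πenπ'π''⟩ = (1/|G|)Σ_{g∈G}χ_π(g)χ_{π'}(g)χ_{π''}(g). -/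
/-!
The principal series character is induced from the character `b ↦ μ₁(b₀₀)μ₂(b₁₁)` of the Borel
subgroup `B` of upper triangular matrices, extended by zero to `G` (`borelChar`). Since the other
two characters are class functions, Frobenius reciprocity turns the average over `G` into
`|B|⁻¹ ∑_{b ∈ B} (μ₁ ⊗ μ₂)(b) χ_ν(b) χ_ρ(b)`.

For `b = [[a, c], [0, d]]`, the conjugate `y⁻¹ b y` is upper triangular exactly when the first
column of `y` spans an eigenline of `b`: the line of `e₁` (giving diagonal `(a, d)`) or, when
`a ≠ d`, the line of `(c, d - a)` (giving `(d, a)`); each such set of `y` is a coset of `B`.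
Hence `χ_ν(b) = ν₁(a)ν₂(d) + ν₁(d)ν₂(a)` for `a ≠ d`, `ν₁ν₂(a)` for `a = d, c ≠ 0`, and
`(q + 1)ν₁ν₂(a)` on scalars. Summing over `c` leaves sums of characters of `𝔽_q^×`, which by
orthogonality are the deltas of the formula.
-/

open scoped Classical in
/-- The character of the principal series representation `I(μ₁,μ₂) = Ind_B^G(μ₁⊗μ₂)` of
`G = GL(2,𝔽_q)`, computed by the standard induced character formula from the Borel
subgroup `B` of upper triangular matrices, on whose elements the inducing character is
`b ↦ μ₁(b₀₀)μ₂(b₁₁)`. -/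
noncomputable def principalSeriesChar {F : Type} [Field F] [Fintype F] [DecidableEq F]
    (μ₁ μ₂ : MulChar F ℂ) (g : GL (Fin 2) F) : ℂ :=
  (Nat.card {b : GL (Fin 2) F // (b : Matrix (Fin 2) (Fin 2) F) 1 0 = 0} : ℂ)⁻¹ *
    ∑ x : GL (Fin 2) F,
      if ((x⁻¹ * g * x : GL (Fin 2) F) : Matrix (Fin 2) (Fin 2) F) 1 0 = 0 then
        μ₁ (((x⁻¹ * g * x : GL (Fin 2) F) : Matrix (Fin 2) (Fin 2) F) 0 0) *
        μ₂ (((x⁻¹ * g * x : GL (Fin 2) F) : Matrix (Fin 2) (Fin 2) F) 1 1)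
      else 0

open Finset Matrix

theorem Fintype.sum_ite_zero_eq_natCard_mul {α R : Type*} [Fintype α] [NonAssocSemiring R]
    (p : α → Prop) [DecidablePred p] (K : R) :
    ∑ x, (if p x then K else 0) = Nat.card {x // p x} * K := by
  rw [← Finset.sum_filter, sum_const, nsmul_eq_mul, ← Fintype.card_subtype,
    Fintype.card_eq_nat_card]

theorem sum_sum_conj_mul {G R : Type*} [Group G] [Fintype G] [CommSemiring R]
    (f ψ : G → R) (hψ : ∀ x g, ψ (x⁻¹ * g * x) = ψ g) :
    ∑ g, (∑ x, f (x⁻¹ * g * x)) * ψ g = Fintype.card G * ∑ h, f h * ψ h := by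
  calc ∑ g, (∑ x, f (x⁻¹ * g * x)) * ψ g
      = ∑ x, ∑ g, f (x⁻¹ * g * x) * ψ (x⁻¹ * g * x) := by
        simp only [sum_mul, hψ]; exact sum_comm
    _ = ∑ _x : G, ∑ h, f h * ψ h := sum_congr rfl fun x _ =>
        Fintype.sum_equiv (MulAut.conj x⁻¹).toEquiv _ _ fun g => by simp
    _ = _ := by simp

theorem MulChar.sum_units {R R' : Type*} [CommMonoid R] [Fintype Rˣ] [CommRing R'] [IsDomain R']
    (χ : MulChar R R') [Decidable (χ = 1)] :
    ∑ u : Rˣ, χ u = Fintype.card Rˣ * if χ = 1 then 1 else 0 := by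
  split_ifs with hχ
  · simp [hχ]
  · obtain ⟨b, hb⟩ := MulChar.ne_one_iff.mp hχ
    rw [mul_zero]
    refine eq_zero_of_mul_eq_self_left hb ?_
    simpa only [Finset.mul_sum, ← map_mul, Units.val_mul, Equiv.coe_mulLeft] using
      Equiv.sum_comp (Equiv.mulLeft b) (fun u : Rˣ => χ u)

namespace PrincipalSeries

variable {F : Type} [Field F]

noncomputable def upperTriangular (a d : Fˣ) (c : F) : GL (Fin 2) F :=
  GeneralLinearGroup.mkOfDetNeZero !![(a : F), c; 0, d] (by simp)

@[simp]
lemma upperTriangular_val (a d : Fˣ) (c : F) :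
    (upperTriangular a d c).1 = !![(a : F), c; 0, d] := rfl

lemma conj_upperTriangular_apply (y : GL (Fin 2) F) (a d : Fˣ) (c : F) :
    let D := y.1.det
    let u := (y⁻¹ * upperTriangular a d c * y).1
    u 1 0 = D⁻¹ * (y.1 1 0 * ((d - a) * y.1 0 0 - c * y.1 1 0)) ∧
    u 0 0 = D⁻¹ * (y.1 1 1 * (a * y.1 0 0 + c * y.1 1 0) - y.1 0 1 * d * y.1 1 0) ∧
    u 1 1 = D⁻¹ * (y.1 0 0 * d * y.1 1 1 - y.1 1 0 * (a * y.1 0 1 + c * y.1 1 1)) := by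
  simp only [Units.val_mul, coe_units_inv, Matrix.inv_def, adjugate_fin_two, Ring.inverse_eq_inv',
    upperTriangular_val, Matrix.mul_apply, Fin.sum_univ_two, Matrix.smul_apply, smul_eq_mul,
    of_apply, cons_val', cons_val_zero, cons_val_one, cons_val_fin_one]
  refine ⟨by ring, by ring, by ring⟩

variable (F) in
abbrev Borel : Type := {b : GL (Fin 2) F // b.1 1 0 = 0}

lemma val_diag_ne_zero_of_mem_borel (b : Borel F) : b.1.1 0 0 ≠ 0 ∧ b.1.1 1 1 ≠ 0 := by
  have hD := b.1.det_ne_zero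
  rw [det_fin_two, b.2, mul_zero, sub_zero] at hD
  exact mul_ne_zero_iff.mp hD

noncomputable def borelEquiv : Fˣ × Fˣ × F ≃ Borel F where
  toFun p := ⟨upperTriangular p.1 p.2.1 p.2.2, rfl⟩
  invFun b := (Units.mk0 _ (val_diag_ne_zero_of_mem_borel b).1,
    Units.mk0 _ (val_diag_ne_zero_of_mem_borel b).2, b.1.1 0 1)
  left_inv p := by ext <;> rfl
  right_inv b := by
    ext i j
    fin_cases i <;> fin_cases j <;> simp [b.2]

lemma card_firstCol_proportional {u v : F} (hv : v ≠ 0) :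
    Nat.card {y : GL (Fin 2) F // y.1 1 0 ≠ 0 ∧ v * y.1 0 0 = u * y.1 1 0} =
      Nat.card (Borel F) := by
  -- left multiplication by `w`, whose first column is `(u, v)`, carries `Borel F` onto this set
  let w : GL (Fin 2) F := GeneralLinearGroup.mkOfDetNeZero !![u, 1; v, 0] (by simpa using hv)
  refine Nat.card_congr (Equiv.subtypeEquiv (Equiv.mulLeft w) fun y => ?_).symm
  have hy := y.det_ne_zero
  rw [det_fin_two] at hy
  simp only [w, Equiv.coe_mulLeft, Units.val_mul, GeneralLinearGroup.val_mkOfDetNeZero,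
    Matrix.mul_apply, Fin.sum_univ_two, of_apply, cons_val', cons_val_zero, cons_val_one,
    cons_val_fin_one, zero_mul, add_zero, one_mul, ne_eq, mul_eq_zero, hv, false_or]
  constructor
  · intro h
    rw [h, mul_zero, sub_zero] at hy
    exact ⟨left_ne_zero_of_mul hy, by rw [h]; ring⟩
  · rintro ⟨-, h⟩
    exact (mul_eq_zero.mp (by linear_combination h : v * y.1 1 0 = 0)).resolve_left hv

variable [DecidableEq F]

noncomputable def borelChar (μ₁ μ₂ : MulChar F ℂ) (b : GL (Fin 2) F) : ℂ :=
  if b.1 1 0 = 0 then μ₁ (b.1 0 0) * μ₂ (b.1 1 1) else 0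

lemma borelChar_conj_upperTriangular (μ₁ μ₂ : MulChar F ℂ) (y : GL (Fin 2) F) (a d : Fˣ) (c : F) :
    borelChar μ₁ μ₂ (y⁻¹ * upperTriangular a d c * y) =
      (if y.1 1 0 = 0 then μ₁ a * μ₂ d else 0) +
      (if y.1 1 0 ≠ 0 ∧ (d - a) * y.1 0 0 = c * y.1 1 0 then μ₁ d * μ₂ a else 0) := by
  obtain ⟨h10, h00, h11⟩ := conj_upperTriangular_apply y a d c
  have hD := y.det_ne_zero
  rw [det_fin_two] at h10 h00 h11 hD
  rw [borelChar]
  by_cases hr : y.1 1 0 = 0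
  · rw [hr, mul_zero, sub_zero] at hD
    obtain ⟨hp, hs⟩ := mul_ne_zero_iff.mp hD
    have ha : (y⁻¹ * upperTriangular a d c * y).1 0 0 = a := by
      rw [h00, hr]; field_simp; ring
    have hd : (y⁻¹ * upperTriangular a d c * y).1 1 1 = d := by
      rw [h11, hr]; field_simp; ring
    rw [if_pos (by rw [h10, hr]; ring), ha, hd]
    simp [hr]
  by_cases hc : (d - a) * y.1 0 0 = c * y.1 1 0
  · have hd : (y⁻¹ * upperTriangular a d c * y).1 0 0 = d := by
      rw [h00]; field_simp; linear_combination (-y.1 1 1) * hc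
    have ha : (y⁻¹ * upperTriangular a d c * y).1 1 1 = a := by
      rw [h11]; field_simp; linear_combination y.1 1 1 * hc
    rw [if_pos (by rw [h10, hc]; ring), ha, hd]
    simp [hr, hc]
  · have hu : (y⁻¹ * upperTriangular a d c * y).1 1 0 ≠ 0 := by
      rw [h10]; exact mul_ne_zero (inv_ne_zero hD) (mul_ne_zero hr (sub_ne_zero.mpr hc))
    rw [if_neg hu]
    simp [hr, hc]

variable [Fintype F]

lemma card_borel : Nat.card (Borel F) = Fintype.card Fˣ ^ 2 * Fintype.card F := by
  rw [← Nat.card_congr borelEquiv, Nat.card_prod, Nat.card_prod, Nat.card_eq_fintype_card,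
    Nat.card_eq_fintype_card]
  ring

lemma card_GL : Nat.card (GL (Fin 2) F) = Nat.card (Borel F) * (Fintype.card F + 1) := by
  rw [card_GL_field, card_borel, Fintype.card_units, Fin.prod_univ_two]
  obtain ⟨n, hn⟩ : ∃ n, Fintype.card F = n + 1 := Nat.exists_eq_add_one.mpr Fintype.card_pos
  rw [hn]
  have h1 : (n + 1) ^ 2 - 1 = n * (n + 2) := by
    rw [Nat.sub_eq_iff_eq_add (by nlinarith)]; ring
  have h2 : (n + 1) ^ 2 - (n + 1) = n * (n + 1) := by
    rw [Nat.sub_eq_iff_eq_add (by nlinarith)]; ring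
  simp only [Fin.val_zero, Fin.val_one, pow_zero, pow_one, h1, h2, add_tsub_cancel_right]
  ring

lemma principalSeriesChar_eq_sum (μ₁ μ₂ : MulChar F ℂ) (g : GL (Fin 2) F) :
    principalSeriesChar μ₁ μ₂ g =
      (Nat.card (Borel F) : ℂ)⁻¹ * ∑ x, borelChar μ₁ μ₂ (x⁻¹ * g * x) := rfl

lemma principalSeriesChar_conj (μ₁ μ₂ : MulChar F ℂ) (x g : GL (Fin 2) F) :
    principalSeriesChar μ₁ μ₂ (x⁻¹ * g * x) = principalSeriesChar μ₁ μ₂ g := by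
  simp only [principalSeriesChar_eq_sum]
  congr 1
  exact Fintype.sum_equiv (Equiv.mulLeft x) _ _ fun y => by simp [mul_assoc]

lemma card_borel_ne_zero : (Nat.card (Borel F) : ℂ) ≠ 0 :=
  Nat.cast_ne_zero.mpr (by rw [card_borel]; positivity)

lemma principalSeriesChar_upperTriangular_of_ne (ν₁ ν₂ : MulChar F ℂ) {a d : Fˣ} (h : a ≠ d)
    (c : F) : principalSeriesChar ν₁ ν₂ (upperTriangular a d c) = ν₁ a * ν₂ d + ν₁ d * ν₂ a := by
  simp only [principalSeriesChar_eq_sum, borelChar_conj_upperTriangular, sum_add_distrib,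
    Fintype.sum_ite_zero_eq_natCard_mul]
  rw [card_firstCol_proportional (sub_ne_zero.mpr (Units.val_injective.ne h.symm)), ← mul_add,
    inv_mul_cancel_left₀ card_borel_ne_zero]

lemma principalSeriesChar_upperTriangular_self (ν₁ ν₂ : MulChar F ℂ) (a : Fˣ) {c : F}
    (hc : c ≠ 0) : principalSeriesChar ν₁ ν₂ (upperTriangular a a c) = ν₁ a * ν₂ a := by
  simp only [principalSeriesChar_eq_sum, borelChar_conj_upperTriangular, sub_self, zero_mul,
    zero_eq_mul, hc, false_or, ne_eq, not_and_self_iff, if_false, add_zero,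
    Fintype.sum_ite_zero_eq_natCard_mul]
  rw [inv_mul_cancel_left₀ card_borel_ne_zero]

lemma principalSeriesChar_scalar (ν₁ ν₂ : MulChar F ℂ) (a : Fˣ) :
    principalSeriesChar ν₁ ν₂ (upperTriangular a a 0) =
      (Fintype.card F + 1) * (ν₁ a * ν₂ a) := by
  have hsplit (y : GL (Fin 2) F) :
      borelChar ν₁ ν₂ (y⁻¹ * upperTriangular a a 0 * y) = ν₁ a * ν₂ a := by
    rw [borelChar_conj_upperTriangular]
    split_ifs <;> simp_all
  simp only [principalSeriesChar_eq_sum, hsplit, sum_const, card_univ, nsmul_eq_mul,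
    ← Nat.card_eq_fintype_card, card_GL]
  push_cast
  rw [mul_assoc, inv_mul_cancel_left₀ card_borel_ne_zero]

lemma sum_principalSeriesChar_mul_upperTriangular (ν₁ ν₂ ρ₁ ρ₂ : MulChar F ℂ) (a d : Fˣ) :
    ∑ c : F, principalSeriesChar ν₁ ν₂ (upperTriangular a d c) *
        principalSeriesChar ρ₁ ρ₂ (upperTriangular a d c) =
      Fintype.card F * ((ν₁ a * ν₂ d + ν₁ d * ν₂ a) * (ρ₁ a * ρ₂ d + ρ₁ d * ρ₂ a)) +
        if a = d then Fintype.card F * (Fintype.card F - 1) * (ν₁ a * ν₂ a * (ρ₁ a * ρ₂ a))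
        else 0 := by
  rcases ne_or_eq a d with had | rfl
  · simp [principalSeriesChar_upperTriangular_of_ne _ _ had, had]
  · have hc (c : F) : principalSeriesChar ν₁ ν₂ (upperTriangular a a c) *
          principalSeriesChar ρ₁ ρ₂ (upperTriangular a a c) =
        ν₁ a * ν₂ a * (ρ₁ a * ρ₂ a) +
          if c = 0 then ((Fintype.card F + 1) ^ 2 - 1) * (ν₁ a * ν₂ a * (ρ₁ a * ρ₂ a)) else 0 := by
      rcases eq_or_ne c 0 with rfl | hc
      · simp only [principalSeriesChar_scalar, if_true]; ring
      · simp [principalSeriesChar_upperTriangular_self _ _ _ hc, hc]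
    simp only [hc, sum_add_distrib, sum_const, card_univ, nsmul_eq_mul, sum_ite_eq', mem_univ,
      if_true]
    ring

lemma sum_borelChar_mul (μ₁ μ₂ : MulChar F ℂ) (f : GL (Fin 2) F → ℂ) :
    ∑ h, borelChar μ₁ μ₂ h * f h =
      ∑ p : Fˣ × Fˣ × F, μ₁ p.1 * μ₂ p.2.1 * f (upperTriangular p.1 p.2.1 p.2.2) := by
  have hzero : ∑ h : {h : GL (Fin 2) F // ¬h.1 1 0 = 0}, borelChar μ₁ μ₂ h * f h = 0 :=
    sum_eq_zero fun h _ => by simp [borelChar, h.2]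
  rw [← Fintype.sum_subtype_add_sum_subtype (fun h : GL (Fin 2) F => h.1 1 0 = 0), hzero,
    add_zero]
  exact (Fintype.sum_equiv borelEquiv _ _ fun p => by simp [borelChar, borelEquiv]).symm

lemma natCast_card_units : (Fintype.card Fˣ : ℂ) = Fintype.card F - 1 := by
  rw [Fintype.card_units, Nat.cast_sub Fintype.card_pos, Nat.cast_one]

open scoped Classical in
lemma sum_borelChar_mul_principalSeriesChar_mul (μ₁ μ₂ ν₁ ν₂ ρ₁ ρ₂ : MulChar F ℂ) :
    ∑ h, borelChar μ₁ μ₂ h * (principalSeriesChar ν₁ ν₂ h * principalSeriesChar ρ₁ ρ₂ h) =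
      Nat.card (Borel F) *
        ((if μ₁ * ν₁ * ρ₁ * μ₂ * ν₂ * ρ₂ = 1 then 1 else 0)
        + (if μ₁ * ν₁ * ρ₁ = 1 then 1 else 0) * (if μ₂ * ν₂ * ρ₂ = 1 then 1 else 0)
        + (if μ₂ * ν₁ * ρ₁ = 1 then 1 else 0) * (if μ₁ * ν₂ * ρ₂ = 1 then 1 else 0)
        + (if μ₁ * ν₂ * ρ₁ = 1 then 1 else 0) * (if μ₂ * ν₁ * ρ₂ = 1 then 1 else 0)
        + (if μ₁ * ν₁ * ρ₂ = 1 then 1 else 0) * (if μ₂ * ν₂ * ρ₁ = 1 then 1 else 0)) := by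
  have hsummand (a d : Fˣ) :
      μ₁ a * μ₂ d * (Fintype.card F * ((ν₁ a * ν₂ d + ν₁ d * ν₂ a) * (ρ₁ a * ρ₂ d + ρ₁ d * ρ₂ a)) +
        if a = d then Fintype.card F * (Fintype.card F - 1) * (ν₁ a * ν₂ a * (ρ₁ a * ρ₂ a))
        else 0) =
      Fintype.card F * ((μ₁ * ν₁ * ρ₁) a * (μ₂ * ν₂ * ρ₂) d + (μ₁ * ν₂ * ρ₂) a * (μ₂ * ν₁ * ρ₁) d
        + (μ₁ * ν₂ * ρ₁) a * (μ₂ * ν₁ * ρ₂) d + (μ₁ * ν₁ * ρ₂) a * (μ₂ * ν₂ * ρ₁) d) +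
      if a = d then Fintype.card F * (Fintype.card F - 1) * (μ₁ * ν₁ * ρ₁ * μ₂ * ν₂ * ρ₂) a
      else 0 := by
    split_ifs with h
    · subst h; simp only [MulChar.mul_apply]; ring
    · simp only [MulChar.mul_apply]; ring
  rw [sum_borelChar_mul]
  simp only [Fintype.sum_prod_type, ← mul_sum, sum_principalSeriesChar_mul_upperTriangular,
    hsummand, sum_add_distrib, sum_ite_eq, mem_univ, if_true, ← sum_mul, MulChar.sum_units,
    card_borel]
  push_cast
  rw [natCast_card_units]
  ring

end PrincipalSeries

open PrincipalSeries

open scoped Classical in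
theorem stmt_18_general {F : Type} [Field F] [Fintype F] [DecidableEq F]
    (μ₁ μ₂ ν₁ ν₂ ρ₁ ρ₂ : MulChar F ℂ) :
    (Fintype.card (GL (Fin 2) F) : ℂ)⁻¹ *
      ∑ g : GL (Fin 2) F,
        principalSeriesChar μ₁ μ₂ g * principalSeriesChar ν₁ ν₂ g *
          principalSeriesChar ρ₁ ρ₂ g
      = (if μ₁ * ν₁ * ρ₁ * μ₂ * ν₂ * ρ₂ = 1 then 1 else 0)
        + (if μ₁ * ν₁ * ρ₁ = 1 then 1 else 0) * (if μ₂ * ν₂ * ρ₂ = 1 then 1 else 0)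
        + (if μ₂ * ν₁ * ρ₁ = 1 then 1 else 0) * (if μ₁ * ν₂ * ρ₂ = 1 then 1 else 0)
        + (if μ₁ * ν₂ * ρ₁ = 1 then 1 else 0) * (if μ₂ * ν₁ * ρ₂ = 1 then 1 else 0)
        + (if μ₁ * ν₁ * ρ₂ = 1 then 1 else 0) * (if μ₂ * ν₂ * ρ₁ = 1 then 1 else 0) := by
  have hconj (x g : GL (Fin 2) F) :
      principalSeriesChar ν₁ ν₂ (x⁻¹ * g * x) * principalSeriesChar ρ₁ ρ₂ (x⁻¹ * g * x) =
        principalSeriesChar ν₁ ν₂ g * principalSeriesChar ρ₁ ρ₂ g := by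
    rw [principalSeriesChar_conj, principalSeriesChar_conj]
  have hG : (Fintype.card (GL (Fin 2) F) : ℂ) ≠ 0 := Nat.cast_ne_zero.mpr Fintype.card_ne_zero
  simp_rw [mul_assoc (principalSeriesChar μ₁ μ₂ _), principalSeriesChar_eq_sum μ₁ μ₂,
    mul_assoc _ (∑ _, _), ← mul_sum]
  rw [sum_sum_conj_mul _ (fun g => principalSeriesChar ν₁ ν₂ g * principalSeriesChar ρ₁ ρ₂ g)
    hconj, sum_borelChar_mul_principalSeriesChar_mul, mul_left_comm, inv_mul_cancel_left₀ hG,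
    inv_mul_cancel_left₀ card_borel_ne_zero]

open scoped Classical in
/-- Triple-product multiplicity formula for principal series of `GL(2,𝔽_q)`:
`⟨I(μ₁,μ₂) I(ν₁,ν₂) I(ρ₁,ρ₂)⟩ = δ(μ₁ν₁ρ₁μ₂ν₂ρ₂) + δ(μ₁ν₁ρ₁)δ(μ₂ν₂ρ₂)
 + δ(μ₂ν₁ρ₁)δ(μ₁ν₂ρ₂) + δ(μ₁ν₂ρ₁)δ(μ₂ν₁ρ₂) + δ(μ₁ν₁ρ₂)δ(μ₂ν₂ρ₁)`. -/
theorem stmt_18 {F : Type} [Field F] [Fintype F] [DecidableEq F]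
    (μ₁ μ₂ ν₁ ν₂ ρ₁ ρ₂ : MulChar F ℂ)
    (hμ : μ₁ ≠ μ₂) (hν : ν₁ ≠ ν₂) (hρ : ρ₁ ≠ ρ₂) :
    (Fintype.card (GL (Fin 2) F) : ℂ)⁻¹ *
      ∑ g : GL (Fin 2) F,
        principalSeriesChar μ₁ μ₂ g * principalSeriesChar ν₁ ν₂ g *
          principalSeriesChar ρ₁ ρ₂ g
      = (if μ₁ * ν₁ * ρ₁ * μ₂ * ν₂ * ρ₂ = 1 then 1 else 0)
        + (if μ₁ * ν₁ * ρ₁ = 1 then 1 else 0) * (if μ₂ * ν₂ * ρ₂ = 1 then 1 else 0)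
        + (if μ₂ * ν₁ * ρ₁ = 1 then 1 else 0) * (if μ₁ * ν₂ * ρ₂ = 1 then 1 else 0)
        + (if μ₁ * ν₂ * ρ₁ = 1 then 1 else 0) * (if μ₂ * ν₁ * ρ₂ = 1 then 1 else 0)
        + (if μ₁ * ν₁ * ρ₂ = 1 then 1 else 0) * (if μ₂ * ν₂ * ρ₁ = 1 then 1 else 0) :=
  stmt_18_general μ₁ μ₂ ν₁ ν₂ ρ₁ ρ₂
end
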